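/- arXiv:1405.3872 — 3 statements merged into one kernel-verified Lean document; each statement's English description precedes it below -/
import Mathlib

section
/- Let p be a prime, m, n ≥ 1, λ a unit of ZMod (p^m) with λ^(p^n) = 1, and let r be a natural number with r ≤ min m n. Then the set G_r = {(a,x) ∈ G(λ,m,n) : p^r divides a and p^r divides x} is a normal subgroup of G(λ,m,n); more precisely, it is the kernel of the surjective group homomorphism G(λ,m,n) → G(λ̄,r,r), (a,x) ↦ (a mod p^r, x mod p^r), where λ̄ denotes the image of λ in (ZMod (p^r))ˣ (which satisfies λ̄^(p^r) = 1). -/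
def IsBeauvilleStructure {G : Type*} [Group G] (x y z a b c : G) : Prop :=
  x * y * z = 1 ∧ a * b * c = 1 ∧
  Subgroup.closure {x, y, z} = ⊤ ∧ Subgroup.closure {a, b, c} = ⊤ ∧
  ∀ u ∈ ({x, y, z} : Set G), ∀ v ∈ ({a, b, c} : Set G), ∀ g : G, ∀ i j : ℤ,
    u ^ i = g * v ^ j * g⁻¹ → u ^ i = 1

/-- The homomorphism `ZMod (p^n) → (ZMod (p^m))ˣ` sending (the class of) `x` to `λ^x`,
well-defined since `λ^(p^n) = 1`. -/
def zmodUnitHom (p m n : ℕ) (lam : (ZMod (p^m))ˣ) (h : lam ^ (p^n) = 1) :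
    Multiplicative (ZMod (p^n)) →* (ZMod (p^m))ˣ :=
  AddMonoidHom.toMultiplicativeLeft
    (ZMod.lift (p^n) ⟨(zmultiplesHom (Additive (ZMod (p^m))ˣ)) (Additive.ofMul lam), by
      show ((p^n : ℕ) : ℤ) • Additive.ofMul lam = 0
      rw [← ofMul_zpow, zpow_natCast, h]
      rfl⟩)

/-- Additive automorphisms of `R` as multiplicative automorphisms of `Multiplicative R`. -/
def addAutToMulAut (R : Type*) [AddZeroClass R] :
    Multiplicative (AddAut R) →* MulAut (Multiplicative R) where
  toFun e := AddEquiv.toMultiplicative e.toAdd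
  map_one' := rfl
  map_mul' _ _ := rfl

/-- The action of `ZMod (p^n)` on `ZMod (p^m)` where `x` acts by multiplication by `λ^x`. -/
def beauvilleAut (p m n : ℕ) (lam : (ZMod (p^m))ˣ) (h : lam ^ (p^n) = 1) :
    Multiplicative (ZMod (p^n)) →* MulAut (Multiplicative (ZMod (p^m))) :=
  ((addAutToMulAut (ZMod (p^m))).comp AddAut.mulLeft).comp (zmodUnitHom p m n lam h)

/-- The semidirect product `G(λ,m,n) = ZMod (p^m) ⋊_λ ZMod (p^n)`. -/
abbrev BeauvilleGroup (p m n : ℕ) (lam : (ZMod (p^m))ˣ) (h : lam ^ (p^n) = 1) :=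
  SemidirectProduct (Multiplicative (ZMod (p^m))) (Multiplicative (ZMod (p^n)))
    (beauvilleAut p m n lam h)

/-!
Reducing `a` modulo `p ^ m'` and `x` modulo `p ^ n'` intertwines the two actions, because
`λ ^ x` reduces to `λ̄ ^ (x mod p ^ n')`, which is well defined as `λ̄ ^ (p ^ n') = 1`.
The two reductions therefore induce a homomorphism of semidirect products; it is surjective
because both reductions are, and its kernel is read off componentwise from
`ker (ZMod N → ZMod d) = d • ZMod N`.
-/

theorem ZMod.castHom_eq_zero_iff {N d : ℕ} (hd : d ∣ N) (a : ZMod N) :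
    ZMod.castHom hd (ZMod d) a = 0 ↔ ∃ b : ZMod N, a = d * b := by
  constructor
  · intro ha
    rw [ZMod.castHom_apply, ← ZMod.intCast_cast, ZMod.intCast_zmod_eq_zero_iff_dvd] at ha
    obtain ⟨t, ht⟩ := ha
    exact ⟨t, by rw [← ZMod.intCast_zmod_cast a, ht]; push_cast; rfl⟩
  · rintro ⟨b, rfl⟩
    rw [map_mul, map_natCast, ZMod.natCast_self, zero_mul]

theorem zmodUnitHom_ofAdd_intCast (p m n : ℕ) (lam : (ZMod (p ^ m))ˣ) (h : lam ^ (p ^ n) = 1)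
    (k : ℤ) : zmodUnitHom p m n lam h (Multiplicative.ofAdd (k : ZMod (p ^ n))) = lam ^ k := by
  simp [zmodUnitHom]

namespace BeauvilleGroup

variable {p m n m' n' : ℕ} {lam : (ZMod (p ^ m))ˣ} {h : lam ^ (p ^ n) = 1}
  {lam' : (ZMod (p ^ m'))ˣ} {h' : lam' ^ (p ^ n') = 1}

abbrev reduceMod (p : ℕ) {k k' : ℕ} (hk : k' ≤ k) :
    Multiplicative (ZMod (p ^ k)) →* Multiplicative (ZMod (p ^ k')) :=
  (ZMod.castHom (pow_dvd_pow p hk) (ZMod (p ^ k'))).toAddMonoidHom.toMultiplicative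

theorem units_map_zmodUnitHom (hm : m' ≤ m) (hn : n' ≤ n)
    (hlam' : Units.map (ZMod.castHom (pow_dvd_pow p hm) (ZMod (p ^ m'))).toMonoidHom lam = lam')
    (x : Multiplicative (ZMod (p ^ n))) :
    Units.map (ZMod.castHom (pow_dvd_pow p hm) (ZMod (p ^ m'))).toMonoidHom
        (zmodUnitHom p m n lam h x) = zmodUnitHom p m' n' lam' h' (reduceMod p hn x) := by
  obtain ⟨k, hk⟩ := ZMod.intCast_surjective (Multiplicative.toAdd x)
  obtain rfl : x = Multiplicative.ofAdd (k : ZMod (p ^ n)) := hk ▸ (ofAdd_toAdd x).symm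
  have : reduceMod p hn (Multiplicative.ofAdd (k : ZMod (p ^ n))) =
      Multiplicative.ofAdd (k : ZMod (p ^ n')) :=
    congrArg Multiplicative.ofAdd (map_intCast (ZMod.castHom (pow_dvd_pow p hn) _) k)
  rw [this, zmodUnitHom_ofAdd_intCast, zmodUnitHom_ofAdd_intCast, map_zpow, hlam']

theorem reduceMod_comp_beauvilleAut (hm : m' ≤ m) (hn : n' ≤ n)
    (hlam' : Units.map (ZMod.castHom (pow_dvd_pow p hm) (ZMod (p ^ m'))).toMonoidHom lam = lam')
    (x : Multiplicative (ZMod (p ^ n))) :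
    (reduceMod p hm).comp (beauvilleAut p m n lam h x).toMonoidHom =
      (beauvilleAut p m' n' lam' h' (reduceMod p hn x)).toMonoidHom.comp (reduceMod p hm) := by
  refine MonoidHom.ext fun a => ?_
  change Multiplicative.ofAdd (ZMod.castHom (pow_dvd_pow p hm) (ZMod (p ^ m'))
      (zmodUnitHom p m n lam h x * Multiplicative.toAdd a)) =
    Multiplicative.ofAdd (zmodUnitHom p m' n' lam' h' (reduceMod p hn x) *
      ZMod.castHom (pow_dvd_pow p hm) (ZMod (p ^ m')) (Multiplicative.toAdd a))
  rw [map_mul, ← units_map_zmodUnitHom hm hn hlam' x]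
  rfl

def reduction (hm : m' ≤ m) (hn : n' ≤ n)
    (hlam' : Units.map (ZMod.castHom (pow_dvd_pow p hm) (ZMod (p ^ m'))).toMonoidHom lam = lam') :
    BeauvilleGroup p m n lam h →* BeauvilleGroup p m' n' lam' h' :=
  SemidirectProduct.map (reduceMod p hm) (reduceMod p hn) (reduceMod_comp_beauvilleAut hm hn hlam')

variable (hm : m' ≤ m) (hn : n' ≤ n)
  (hlam' : Units.map (ZMod.castHom (pow_dvd_pow p hm) (ZMod (p ^ m'))).toMonoidHom lam = lam')

theorem reduction_surjective :
    Function.Surjective (reduction (h := h) (h' := h') hm hn hlam') := by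
  rintro ⟨a, x⟩
  obtain ⟨b, rfl⟩ := ZMod.castHom_surjective (pow_dvd_pow p hm) (Multiplicative.toAdd a)
  obtain ⟨y, rfl⟩ := ZMod.castHom_surjective (pow_dvd_pow p hn) (Multiplicative.toAdd x)
  exact ⟨⟨Multiplicative.ofAdd b, Multiplicative.ofAdd y⟩, rfl⟩

theorem mem_ker_reduction (g : BeauvilleGroup p m n lam h) :
    g ∈ (reduction (h' := h') hm hn hlam').ker ↔
      (∃ b : ZMod (p ^ m), Multiplicative.toAdd g.left = (p : ZMod (p ^ m)) ^ m' * b) ∧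
      (∃ c : ZMod (p ^ n), Multiplicative.toAdd g.right = (p : ZMod (p ^ n)) ^ n' * c) := by
  simp only [MonoidHom.mem_ker, SemidirectProduct.ext_iff, ← Nat.cast_pow]
  exact (ZMod.castHom_eq_zero_iff (pow_dvd_pow p hm) _).and
    (ZMod.castHom_eq_zero_iff (pow_dvd_pow p hn) _)

end BeauvilleGroup

theorem divisible_set_is_kernel_of_reduction_general
    (p m n r : ℕ) (hr : r ≤ min m n)
    (lam : (ZMod (p ^ m))ˣ) (h : lam ^ (p ^ n) = 1)
    (lam' : (ZMod (p ^ r))ˣ)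
    (hlam' : Units.map (ZMod.castHom (pow_dvd_pow p (hr.trans (min_le_left m n)))
        (ZMod (p ^ r))).toMonoidHom lam = lam')
    (h' : lam' ^ (p ^ r) = 1) :
    ∃ ψ : BeauvilleGroup p m n lam h →* BeauvilleGroup p r r lam' h',
      Function.Surjective ψ ∧
      (∀ g : BeauvilleGroup p m n lam h,
        Multiplicative.toAdd (ψ g).left =
          ZMod.castHom (pow_dvd_pow p (hr.trans (min_le_left m n))) (ZMod (p ^ r))
            (Multiplicative.toAdd g.left) ∧
        Multiplicative.toAdd (ψ g).right =
          ZMod.castHom (pow_dvd_pow p (hr.trans (min_le_right m n))) (ZMod (p ^ r))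
            (Multiplicative.toAdd g.right)) ∧
      (ψ.ker : Set (BeauvilleGroup p m n lam h)) =
        {g : BeauvilleGroup p m n lam h |
          (∃ b : ZMod (p ^ m), Multiplicative.toAdd g.left = (p : ZMod (p ^ m)) ^ r * b) ∧
          (∃ c : ZMod (p ^ n), Multiplicative.toAdd g.right = (p : ZMod (p ^ n)) ^ r * c)} := by
  have hm := hr.trans (min_le_left m n)
  have hn := hr.trans (min_le_right m n)
  exact ⟨BeauvilleGroup.reduction hm hn hlam', BeauvilleGroup.reduction_surjective hm hn hlam',
    fun _ => ⟨rfl, rfl⟩, Set.ext (BeauvilleGroup.mem_ker_reduction hm hn hlam')⟩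

/-- For `r ≤ min m n`, the set `G_r` of pairs `(a,x)` with `p^r ∣ a` and
`p^r ∣ x` is the kernel of the surjective homomorphism `G(λ,m,n) → G(λ̄,r,r)` given by
componentwise reduction modulo `p^r`; in particular it is a normal subgroup. -/
theorem divisible_set_is_kernel_of_reduction
    (p m n r : ℕ) (hp : p.Prime) (hm : 1 ≤ m) (hn : 1 ≤ n) (hr : r ≤ min m n)
    (lam : (ZMod (p ^ m))ˣ) (h : lam ^ (p ^ n) = 1)
    (lam' : (ZMod (p ^ r))ˣ)
    (hlam' : Units.map (ZMod.castHom (pow_dvd_pow p (hr.trans (min_le_left m n)))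
        (ZMod (p ^ r))).toMonoidHom lam = lam')
    (h' : lam' ^ (p ^ r) = 1) :
    ∃ ψ : BeauvilleGroup p m n lam h →* BeauvilleGroup p r r lam' h',
      Function.Surjective ψ ∧
      (∀ g : BeauvilleGroup p m n lam h,
        Multiplicative.toAdd (ψ g).left =
          ZMod.castHom (pow_dvd_pow p (hr.trans (min_le_left m n))) (ZMod (p ^ r))
            (Multiplicative.toAdd g.left) ∧
        Multiplicative.toAdd (ψ g).right =
          ZMod.castHom (pow_dvd_pow p (hr.trans (min_le_right m n))) (ZMod (p ^ r))
            (Multiplicative.toAdd g.right)) ∧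
      (ψ.ker : Set (BeauvilleGroup p m n lam h)) =
        {g : BeauvilleGroup p m n lam h |
          (∃ b : ZMod (p ^ m), Multiplicative.toAdd g.left = (p : ZMod (p ^ m)) ^ r * b) ∧
          (∃ c : ZMod (p ^ n), Multiplicative.toAdd g.right = (p : ZMod (p ^ n)) ^ r * c)} :=
  divisible_set_is_kernel_of_reduction_general p m n r hr lam h lam' hlam' h'
end

section
/- Let p be an odd prime, m, n ≥ 1, and λ a unit of ZMod (p^m) with λ^(p^n) = 1. If ((x,y,z),(a,b,c)) is an unmixed Beauville structure on G(λ,m,n), then n = m and each of the six elements x, y, z, a, b, c has order exactly p^n; that is, every unmixed Beauville structure on G(λ,m,n) is balanced of constant signature p^n. -/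
/-!
Since `λ ^ p ^ n = 1` and `(ℤ/p)ˣ` has order prime to `p`, `λ ≡ 1 (mod p)`; hence reducing both
coordinates mod `p` is a surjective homomorphism `G(λ,m,n) → (ℤ/p)²`. For odd `p`, lifting the
exponent shows that the geometric sum `1 + w + ⋯ + w ^ (p ^ r - 1)` with `w ≡ 1 (mod p)` is `p ^ r`
times a unit, so `(a, t) ^ p ^ r = (p ^ r U a, p ^ r t)` with `p ∤ U`.

If `n < m`, each generating triple contains an element whose first coordinate is a unit, and some
power of it is `(p ^ (m - 1), 0)`; the two triples then share a nontrivial power, which the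
Beauville condition forbids. The case `m < n` is symmetric, with `(0, p ^ (n - 1))`. If `n = m`,
no member of a generating triple with product `1` maps to `0` in `(ℤ/p)²`, for otherwise the image
would be cyclic; the power formula then gives each member order exactly `p ^ n`.
-/

open Finset Multiplicative SemidirectProduct

theorem Int.exists_geom_sum_prime_pow_eq {p : ℕ} (hp : p.Prime) (hodd : Odd p) {W : ℤ}
    (hW : (p : ℤ) ∣ W - 1) (r : ℕ) :
    ∃ U : ℤ, ¬ (p : ℤ) ∣ U ∧ ∑ i ∈ Finset.range (p ^ r), W ^ i = p ^ r * U := by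
  have hpZ : Prime (p : ℤ) := Nat.prime_iff_prime_int.mp hp
  have hmult : emultiplicity (p : ℤ) (∑ i ∈ Finset.range (p ^ r), W ^ i) = r := by
    rcases eq_or_ne W 1 with rfl | hW1
    · simp [emultiplicity_pow_self_of_prime hpZ]
    have hfin : emultiplicity (p : ℤ) (W - 1) ≠ ⊤ :=
      finiteMultiplicity_iff_emultiplicity_ne_top.mp
        (Int.finiteMultiplicity_iff.mpr ⟨by simpa using hp.ne_one, sub_ne_zero.mpr hW1⟩)
    have hWp : ¬ (p : ℤ) ∣ W := fun hd => hpZ.not_dvd_one (by simpa using dvd_sub hd hW)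
    have hLTE := emultiplicity_pow_prime_pow_sub_pow_prime_pow hpZ hodd hW hWp r
    rw [one_pow, ← geom_sum_mul, emultiplicity_mul hpZ, add_comm] at hLTE
    exact WithTop.add_left_cancel hfin hLTE
  obtain ⟨⟨U, hU⟩, hnot⟩ := emultiplicity_eq_coe.mp hmult
  refine ⟨U, fun hpU => hnot ?_, hU⟩
  rw [hU, pow_succ]
  exact mul_dvd_mul_left _ hpU

namespace ZMod

variable {p : ℕ} [hp : Fact p.Prime]

theorem units_eq_one_of_pow_prime_pow_eq_one {u : (ZMod p)ˣ} {n : ℕ} (hu : u ^ p ^ n = 1) :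
    u = 1 := by
  have hcop : (p ^ n).Coprime (p - 1) :=
    Nat.Coprime.pow_left n ((Nat.coprime_self_sub_right hp.out.one_le).mpr
      (Nat.coprime_one_right p))
  simpa [hcop.gcd_eq_one] using pow_gcd_eq_one.mpr ⟨hu, units_pow_card_sub_one_eq_one p u⟩

theorem isUnit_of_castHom_ne_zero {r : ℕ} (hr : r ≠ 0) {a : ZMod (p ^ r)}
    (ha : castHom (dvd_pow_self p hr) (ZMod p) a ≠ 0) : IsUnit a := by
  rw [← natCast_zmod_val a, isUnit_iff_coprime, Nat.coprime_pow_right_iff (Nat.pos_of_ne_zero hr),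
    Nat.coprime_comm, hp.out.coprime_iff_not_dvd, ← natCast_eq_zero_iff]
  simpa [castHom_apply, natCast_val] using ha

theorem intCast_prime_pow_mul_ne_zero {k r : ℕ} (hk : k < r) {U : ℤ} (hU : ¬ (p : ℤ) ∣ U) :
    ((p ^ k * U : ℤ) : ZMod (p ^ r)) ≠ 0 := by
  rw [Ne, intCast_zmod_eq_zero_iff_dvd, Nat.cast_pow, ← Nat.add_sub_cancel' hk.le, pow_add,
    mul_dvd_mul_iff_left (pow_ne_zero _ (by exact_mod_cast hp.out.ne_zero))]
  exact fun hd => hU ((dvd_pow_self _ (by omega)).trans hd)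

theorem exists_nsmul_eq_prime_pow_pred {r : ℕ} {a : ZMod (p ^ r)} (ha : a ≠ 0) :
    ∃ c : ℕ, c • a = (p : ZMod (p ^ r)) ^ (r - 1) := by
  have : NeZero (p ^ r) := ⟨pow_ne_zero _ hp.out.ne_zero⟩
  obtain ⟨e, w, hpw, hval⟩ :=
    Nat.exists_eq_pow_mul_and_not_dvd ((val_ne_zero a).mpr ha) p hp.out.ne_one
  have hw₀ : 0 < w := Nat.pos_of_ne_zero fun hw₀ => hpw (hw₀ ▸ dvd_zero p)
  have her : e < r := by
    have := val_lt a
    rw [hval] at this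
    exact (Nat.pow_lt_pow_iff_right hp.out.one_lt).mp
      ((Nat.le_mul_of_pos_right _ hw₀).trans_lt this)
  have hw : IsUnit (w : ZMod (p ^ r)) := (isUnit_iff_coprime w _).mpr
    (Nat.Coprime.pow_right r (Nat.coprime_comm.mp ((hp.out.coprime_iff_not_dvd).mpr hpw)))
  refine ⟨((hw.unit⁻¹ : (ZMod (p ^ r))ˣ) : ZMod (p ^ r)).val * p ^ (r - 1 - e), ?_⟩
  rw [nsmul_eq_mul, ← natCast_zmod_val a, hval]
  push_cast
  rw [natCast_zmod_val]
  calc _ = ((hw.unit⁻¹ : (ZMod (p ^ r))ˣ) * (w : ZMod (p ^ r))) * (p ^ (r - 1 - e) * p ^ e) :=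
        by ring
    _ = _ := by rw [hw.val_inv_mul, one_mul, ← pow_add, Nat.sub_add_cancel (by omega)]

theorem exists_geom_sum_prime_pow_eq (hodd : Odd p) {m : ℕ} (hm : m ≠ 0) {w : ZMod (p ^ m)}
    (hw : castHom (dvd_pow_self p hm) (ZMod p) w = 1) (r : ℕ) :
    ∃ U : ℤ, ¬ (p : ℤ) ∣ U ∧
      ∑ i ∈ range (p ^ r), w ^ i = ((p ^ r * U : ℤ) : ZMod (p ^ m)) := by
  have hW : (p : ℤ) ∣ (cast w : ℤ) - 1 := by
    rw [← intCast_zmod_eq_zero_iff_dvd, Int.cast_sub, intCast_cast,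
      ← castHom_apply (h := dvd_pow_self p hm), hw, Int.cast_one, sub_self]
  obtain ⟨U, hU, hsum⟩ := Int.exists_geom_sum_prime_pow_eq hp.out hodd hW r
  refine ⟨U, hU, ?_⟩
  simp only [← hsum, Int.cast_sum, Int.cast_pow, intCast_zmod_cast]

theorem prime_pow_pred_ne_zero {r : ℕ} (hr : r ≠ 0) : (p : ZMod (p ^ r)) ^ (r - 1) ≠ 0 := by
  rw [← Nat.cast_pow, Ne, natCast_eq_zero_iff, Nat.pow_dvd_pow_iff_le_right hp.out.one_lt]
  omega

end ZMod

section

variable {G H : Type*} [Group G] [Group H]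

theorem Subgroup.exists_map_ne_one_of_closure_eq_top {S : Set G} (hS : closure S = ⊤)
    {f : G →* H} (hf : f ≠ 1) : ∃ u ∈ S, f u ≠ 1 := by
  by_contra! h
  exact hf (MonoidHom.eq_of_eqOn_dense hS fun u hu => h u hu)

theorem not_isCyclic_prod_self (M : Type*) [Group M] [Nontrivial M] : ¬ IsCyclic (M × M) := by
  intro hcyc
  have hcard : Nat.card M = 1 := by
    simpa [Nat.Coprime] using (Group.isCyclic_prod_iff.mp hcyc).2.2
  exact not_subsingleton M (Nat.card_eq_one_iff_unique.mp hcard).1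

theorem map_ne_one_of_mul_mul_eq_one (hH : ¬ IsCyclic H) {f : G →* H}
    (hf : Function.Surjective f) {x y z : G} (hxyz : x * y * z = 1)
    (hgen : Subgroup.closure {x, y, z} = ⊤) : f x ≠ 1 := by
  intro hx
  have hz : f z = (f y)⁻¹ := by
    apply eq_inv_of_mul_eq_one_right
    simpa [hx] using congrArg f hxyz
  have hle : Subgroup.closure {x, y, z} ≤ (Subgroup.zpowers (f y)).comap f := by
    rw [Subgroup.closure_le]
    rintro _ (rfl | rfl | rfl)
    · rw [SetLike.mem_coe, Subgroup.mem_comap, hx]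
      exact one_mem _
    · exact Subgroup.mem_zpowers _
    · simp [hz]
  refine hH ⟨f y, fun h => ?_⟩
  obtain ⟨g, rfl⟩ := hf h
  exact Subgroup.mem_zpowers_iff.mp (hle (hgen ▸ Subgroup.mem_top g))

theorem map_ne_one_of_mem_of_mul_mul_eq_one (hH : ¬ IsCyclic H) {f : G →* H}
    (hf : Function.Surjective f) {x y z : G} (hxyz : x * y * z = 1)
    (hgen : Subgroup.closure {x, y, z} = ⊤) : ∀ u ∈ ({x, y, z} : Set G), f u ≠ 1 := by
  have hyzx : y * z * x = 1 := by rwa [mul_assoc, mul_eq_one_comm] at hxyz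
  have hzxy : z * x * y = 1 := by rwa [mul_assoc, mul_eq_one_comm] at hyzx
  have hrot : ({y, z, x} : Set G) = {x, y, z} := by
    ext
    simp only [Set.mem_insert_iff, Set.mem_singleton_iff]
    tauto
  rintro u (rfl | rfl | rfl)
  · exact map_ne_one_of_mul_mul_eq_one hH hf hxyz hgen
  · exact map_ne_one_of_mul_mul_eq_one hH hf hyzx (hrot ▸ hgen)
  · refine map_ne_one_of_mul_mul_eq_one hH hf hzxy ?_
    rwa [← hrot, Set.insert_comm, Set.pair_comm] at hgen

theorem IsBeauvilleStructure.disjoint_zpowers {x y z a b c : G}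
    (hB : IsBeauvilleStructure x y z a b c) {u v : G} (hu : u ∈ ({x, y, z} : Set G))
    (hv : v ∈ ({a, b, c} : Set G)) : Disjoint (Subgroup.zpowers u) (Subgroup.zpowers v) := by
  rw [Subgroup.disjoint_def]
  intro w hwu hwv
  obtain ⟨i, rfl⟩ := Subgroup.mem_zpowers_iff.mp hwu
  obtain ⟨j, hj⟩ := Subgroup.mem_zpowers_iff.mp hwv
  exact hB.2.2.2.2 u hu v hv 1 i j (by simp [hj])

theorem not_isBeauvilleStructure_of_forall_mem_zpowers {f : G →* H} (hf : f ≠ 1) {w : G}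
    (hw : w ≠ 1) (hmem : ∀ u, f u ≠ 1 → w ∈ Subgroup.zpowers u) (x y z a b c : G) :
    ¬ IsBeauvilleStructure x y z a b c := by
  intro hB
  obtain ⟨u, hu, hfu⟩ := Subgroup.exists_map_ne_one_of_closure_eq_top hB.2.2.1 hf
  obtain ⟨v, hv, hfv⟩ := Subgroup.exists_map_ne_one_of_closure_eq_top hB.2.2.2.1 hf
  exact hw (Subgroup.disjoint_def.mp (hB.disjoint_zpowers hu hv) (hmem u hfu) (hmem v hfv))

end

theorem Multiplicative.zmod_pow_eq_one {k : ℕ} (t : Multiplicative (ZMod k)) : t ^ k = 1 := by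
  rw [← ofAdd_toAdd t, ← ofAdd_nsmul, nsmul_eq_mul, ZMod.natCast_self, zero_mul, ofAdd_zero]

theorem MonoidHom.map_ofAdd_prime_pow_pred_mem_zpowers {G : Type*} [Group G] {p r : ℕ}
    [Fact p.Prime] (ι : Multiplicative (ZMod (p ^ r)) →* G) {a : ZMod (p ^ r)} (ha : a ≠ 0) :
    ι (ofAdd ((p : ZMod (p ^ r)) ^ (r - 1))) ∈ Subgroup.zpowers (ι (ofAdd a)) := by
  obtain ⟨c, hc⟩ := ZMod.exists_nsmul_eq_prime_pow_pred ha
  rw [← hc, ofAdd_nsmul, map_pow]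
  exact Subgroup.npow_mem_zpowers _ _

theorem SemidirectProduct.right_pow {N K : Type*} [Group N] [Group K] {φ : K →* MulAut N}
    (g : N ⋊[φ] K) (k : ℕ) : (g ^ k).right = g.right ^ k :=
  map_pow rightHom g k

namespace BeauvilleGroup

variable {p m n : ℕ} {lam : (ZMod (p ^ m))ˣ} {h : lam ^ p ^ n = 1}

local notation "𝔾" => BeauvilleGroup p m n lam h

theorem left_pow (g : 𝔾) (k : ℕ) :
    (g ^ k).left = ofAdd ((∑ i ∈ range k, (zmodUnitHom p m n lam h g.right : ZMod (p ^ m)) ^ i)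
      * toAdd g.left) := by
  induction k with
  | zero => simp
  | succ k ih =>
    rw [pow_succ, mul_left, ih, right_pow, sum_range_succ]
    change ofAdd _ * ofAdd ((zmodUnitHom p m n lam h (g.right ^ k) : ZMod (p ^ m)) * _) = _
    rw [map_pow, Units.val_pow_eq_pow_val, ← ofAdd_add, add_mul]

variable [Fact p.Prime]

theorem castHom_zmodUnitHom (hm : m ≠ 0) (t : Multiplicative (ZMod (p ^ n))) :
    ZMod.castHom (dvd_pow_self p hm) (ZMod p) (zmodUnitHom p m n lam h t) = 1 := by
  have hu : Units.map (ZMod.castHom (dvd_pow_self p hm) (ZMod p)).toMonoidHom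
      (zmodUnitHom p m n lam h t) ^ p ^ n = 1 := by
    rw [← map_pow, ← map_pow, Multiplicative.zmod_pow_eq_one, map_one, map_one]
  simpa using congrArg Units.val (ZMod.units_eq_one_of_pow_prime_pow_eq_one hu)

theorem exists_left_pow_prime_pow (hodd : Odd p) (hm : m ≠ 0) (g : 𝔾) (r : ℕ) :
    ∃ U : ℤ, ¬ (p : ℤ) ∣ U ∧
      (g ^ p ^ r).left = ofAdd (((p ^ r * U : ℤ) : ZMod (p ^ m)) * toAdd g.left) := by
  obtain ⟨U, hU, hsum⟩ :=
    ZMod.exists_geom_sum_prime_pow_eq hodd hm (castHom_zmodUnitHom hm g.right) r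
  exact ⟨U, hU, by rw [left_pow, hsum]⟩

theorem pow_prime_pow_of_le (hodd : Odd p) (hm : m ≠ 0) {r : ℕ} (hr : m ≤ r) (g : 𝔾) :
    g ^ p ^ r = inr (g.right ^ p ^ r) := by
  obtain ⟨U, -, hleft⟩ := exists_left_pow_prime_pow hodd hm g r
  have hzero : ((p ^ r * U : ℤ) : ZMod (p ^ m)) = 0 := by
    rw [ZMod.intCast_zmod_eq_zero_iff_dvd]
    exact Dvd.dvd.mul_right (by exact_mod_cast pow_dvd_pow p hr) U
  ext
  · rw [hleft, hzero, zero_mul, left_inr, ofAdd_zero]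
  · rw [right_pow, right_inr]

def leftModP (hm : m ≠ 0) : 𝔾 →* Multiplicative (ZMod p) where
  toFun g := ofAdd (ZMod.castHom (dvd_pow_self p hm) (ZMod p) (toAdd g.left))
  map_one' := by simp
  map_mul' g₁ g₂ := by
    change ofAdd (ZMod.castHom _ _ (toAdd g₁.left +
      (zmodUnitHom p m n lam h g₁.right : ZMod (p ^ m)) * toAdd g₂.left)) = _
    rw [map_add, map_mul, castHom_zmodUnitHom hm, one_mul, ofAdd_add]

def rightModP (hn : n ≠ 0) : 𝔾 →* Multiplicative (ZMod p) :=
  (ZMod.castHom (dvd_pow_self p hn) (ZMod p)).toAddMonoidHom.toMultiplicative.comp rightHom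

def modP (hm : m ≠ 0) (hn : n ≠ 0) :
    𝔾 →* Multiplicative (ZMod p) × Multiplicative (ZMod p) :=
  (leftModP hm).prod (rightModP hn)

theorem modP_surjective (hm : m ≠ 0) (hn : n ≠ 0) :
    Function.Surjective (modP hm hn : 𝔾 → _) := by
  rintro ⟨α, β⟩
  obtain ⟨a, ha⟩ := ZMod.ringHom_surjective (ZMod.castHom (dvd_pow_self p hm) _) (toAdd α)
  obtain ⟨t, ht⟩ := ZMod.ringHom_surjective (ZMod.castHom (dvd_pow_self p hn) _) (toAdd β)
  refine ⟨⟨ofAdd a, ofAdd t⟩, ?_⟩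
  simp only [modP, MonoidHom.prod_apply]
  exact Prod.ext (congrArg ofAdd ha) (congrArg ofAdd ht)

theorem leftModP_ne_one (hm : m ≠ 0) : leftModP hm ≠ (1 : 𝔾 →* _) := by
  intro h1
  have := congrArg toAdd (DFunLike.congr_fun h1 (inl (ofAdd (1 : ZMod (p ^ m)))))
  simp only [leftModP, MonoidHom.coe_mk, OneHom.coe_mk, left_inl, toAdd_ofAdd,
    MonoidHom.one_apply, toAdd_one, map_one] at this
  exact one_ne_zero this

theorem rightModP_ne_one (hn : n ≠ 0) : rightModP hn ≠ (1 : 𝔾 →* _) := by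
  intro h1
  have := congrArg toAdd (DFunLike.congr_fun h1 (inr (ofAdd (1 : ZMod (p ^ n)))))
  simp only [rightModP, MonoidHom.comp_apply, rightHom_inr,
    AddMonoidHom.toMultiplicative_apply_apply, toAdd_ofAdd, RingHom.toAddMonoidHom_eq_coe,
    AddMonoidHom.coe_coe, MonoidHom.one_apply, toAdd_one, map_one] at this
  exact one_ne_zero this

theorem toAdd_left_pow_prime_pow_ne_zero (hodd : Odd p) (hm : m ≠ 0) {r : ℕ} (hr : r < m)
    (g : 𝔾) (hg : leftModP hm g ≠ 1) : toAdd (g ^ p ^ r).left ≠ 0 := by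
  have hunit : IsUnit (toAdd g.left) :=
    ZMod.isUnit_of_castHom_ne_zero hm fun h0 => hg (congrArg ofAdd h0)
  obtain ⟨U, hU, hleft⟩ := exists_left_pow_prime_pow hodd hm g r
  rw [hleft, toAdd_ofAdd, Ne, hunit.mul_left_eq_zero]
  exact ZMod.intCast_prime_pow_mul_ne_zero hr hU

theorem toAdd_right_pow_prime_pow_ne_zero (hn : n ≠ 0) {r : ℕ} (hr : r < n) (g : 𝔾)
    (hg : rightModP hn g ≠ 1) : toAdd (g ^ p ^ r).right ≠ 0 := by
  have hunit : IsUnit (toAdd g.right) :=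
    ZMod.isUnit_of_castHom_ne_zero hn fun h0 => hg (congrArg ofAdd h0)
  have hU : ¬ (p : ℤ) ∣ 1 := (Nat.prime_iff_prime_int.mp Fact.out).not_dvd_one
  rw [right_pow, toAdd_pow, nsmul_eq_mul, Ne, hunit.mul_left_eq_zero]
  simpa using ZMod.intCast_prime_pow_mul_ne_zero hr hU

theorem orderOf_eq_of_modP_ne_one (hodd : Odd p) (hm : m ≠ 0) (hn : n ≠ 0) (hnm : n = m)
    (g : 𝔾) (hg : modP hm hn g ≠ 1) : orderOf g = p ^ n := by
  obtain ⟨k, rfl⟩ := Nat.exists_eq_succ_of_ne_zero hn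
  refine orderOf_eq_prime_pow (fun h1 => ?_) ?_
  · by_cases hl : leftModP hm g = 1
    · have hr : rightModP hn g ≠ 1 := fun hr => hg (Prod.ext hl hr)
      exact toAdd_right_pow_prime_pow_ne_zero hn k.lt_succ_self g hr (by rw [h1]; rfl)
    · exact toAdd_left_pow_prime_pow_ne_zero hodd hm (r := k) (by omega) g hl (by rw [h1]; rfl)
  · rw [pow_prime_pow_of_le hodd hm hnm.ge g, Multiplicative.zmod_pow_eq_one, map_one]

theorem inl_mem_zpowers_of_lt (hodd : Odd p) (hnm : n < m) (u : 𝔾)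
    (hu : leftModP (Nat.ne_zero_of_lt hnm) u ≠ 1) :
    inl (ofAdd ((p : ZMod (p ^ m)) ^ (m - 1))) ∈ Subgroup.zpowers u := by
  have hpow : inl (u ^ p ^ n).left = u ^ p ^ n := by
    conv_rhs => rw [← inl_left_mul_inr_right (u ^ p ^ n), right_pow,
      Multiplicative.zmod_pow_eq_one, map_one, mul_one]
  have hmem := (inl : _ →* 𝔾).map_ofAdd_prime_pow_pred_mem_zpowers
    (toAdd_left_pow_prime_pow_ne_zero hodd _ hnm u hu)
  rw [ofAdd_toAdd, hpow] at hmem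
  exact Subgroup.zpowers_le.mpr (Subgroup.npow_mem_zpowers u _) hmem

theorem inr_mem_zpowers_of_gt (hodd : Odd p) (hm : m ≠ 0) (hmn : m < n) (u : 𝔾)
    (hu : rightModP (Nat.ne_zero_of_lt hmn) u ≠ 1) :
    inr (ofAdd ((p : ZMod (p ^ n)) ^ (n - 1))) ∈ Subgroup.zpowers u := by
  have hpow : inr (u ^ p ^ (n - 1)).right = u ^ p ^ (n - 1) := by
    rw [pow_prime_pow_of_le hodd hm (Nat.le_sub_one_of_lt hmn) u, right_inr]
  have hmem := (inr : _ →* 𝔾).map_ofAdd_prime_pow_pred_mem_zpowers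
    (toAdd_right_pow_prime_pow_ne_zero _ (r := n - 1) (by omega) u hu)
  rw [ofAdd_toAdd, hpow] at hmem
  exact Subgroup.zpowers_le.mpr (Subgroup.npow_mem_zpowers u _) hmem

theorem not_isBeauvilleStructure_of_lt (hodd : Odd p) (hnm : n < m) (x y z a b c : 𝔾) :
    ¬ IsBeauvilleStructure x y z a b c :=
  not_isBeauvilleStructure_of_forall_mem_zpowers (leftModP_ne_one _)
    ((map_ne_one_iff (inl : _ →* 𝔾) inl_injective).mpr
      (ZMod.prime_pow_pred_ne_zero (Nat.ne_zero_of_lt hnm)))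
    (inl_mem_zpowers_of_lt hodd hnm) x y z a b c

theorem not_isBeauvilleStructure_of_gt (hodd : Odd p) (hm : m ≠ 0) (hmn : m < n)
    (x y z a b c : 𝔾) : ¬ IsBeauvilleStructure x y z a b c :=
  not_isBeauvilleStructure_of_forall_mem_zpowers (rightModP_ne_one _)
    ((map_ne_one_iff (inr : _ →* 𝔾) inr_injective).mpr
      (ZMod.prime_pow_pred_ne_zero (Nat.ne_zero_of_lt hmn)))
    (inr_mem_zpowers_of_gt hodd hm hmn) x y z a b c

end BeauvilleGroup

/-- For odd `p`, any unmixed Beauville structure on `G(λ,m,n)` forces `n = m`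
and is balanced of constant signature `p^n`. -/
theorem beauville_on_semidirect_is_balanced
    (p m n : ℕ) (hp : p.Prime) (hodd : Odd p) (hm : 1 ≤ m) (hn : 1 ≤ n)
    (lam : (ZMod (p ^ m))ˣ) (h : lam ^ (p ^ n) = 1)
    (x y z a b c : BeauvilleGroup p m n lam h)
    (hB : IsBeauvilleStructure x y z a b c) :
    n = m ∧ orderOf x = p ^ n ∧ orderOf y = p ^ n ∧ orderOf z = p ^ n ∧
      orderOf a = p ^ n ∧ orderOf b = p ^ n ∧ orderOf c = p ^ n := by
  have : Fact p.Prime := ⟨hp⟩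
  rcases lt_trichotomy n m with hlt | rfl | hgt
  · exact absurd hB (BeauvilleGroup.not_isBeauvilleStructure_of_lt hodd hlt x y z a b c)
  · obtain ⟨hxyz, habc, hgen₁, hgen₂, -⟩ := hB
    have hn₀ : n ≠ 0 := Nat.one_le_iff_ne_zero.mp hn
    have hcyc := not_isCyclic_prod_self (Multiplicative (ZMod p))
    have hsurj := BeauvilleGroup.modP_surjective (h := h) hn₀ hn₀
    have hxyz₁ := map_ne_one_of_mem_of_mul_mul_eq_one hcyc hsurj hxyz hgen₁
    have habc₁ := map_ne_one_of_mem_of_mul_mul_eq_one hcyc hsurj habc hgen₂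
    have hord := BeauvilleGroup.orderOf_eq_of_modP_ne_one (h := h) hodd hn₀ hn₀ rfl
    exact ⟨rfl, hord x (hxyz₁ x (by simp)), hord y (hxyz₁ y (by simp)),
      hord z (hxyz₁ z (by simp)), hord a (habc₁ a (by simp)), hord b (habc₁ b (by simp)),
      hord c (habc₁ c (by simp))⟩
  · exact absurd hB (BeauvilleGroup.not_isBeauvilleStructure_of_gt hodd
      (Nat.one_le_iff_ne_zero.mp hm) hgt x y z a b c)
end

section
/- Let p be an odd prime, n ≥ 1, and λ a unit of ZMod (p^n) with λ^(p^n) = 1 and λ ≠ 1. Let s < n be the natural number such that λ - 1 is divisible by p^s but not by p^(s+1) in ZMod (p^n). Then the abelianization of G(λ,n,n) has cardinality p^(n+s), i.e., Nat.card (Abelianization (G(λ,n,n))) = p^(n+s). -/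
/-! The commutator of `(a, x)` and `(b, y)` in `G(λ,m,n)` is `((1 - λ^y) a + (λ^x - 1) b, 0)`, and
`λ - 1` divides every `λ^x - 1`, so the derived subgroup is the cyclic subgroup of `ZMod (p^m)`
generated by `λ - 1`, which is itself the commutator of `(0, 1)` and `(1, 0)`. For `m = n` and
`λ - 1 = p^s · unit` this subgroup has order `p^(n-s)`, leaving `p^(2n) / p^(n-s)` for the
abelianization. -/

open scoped commutatorElement

theorem Units.sub_one_dvd_zpow_sub_one {R : Type*} [CommRing R] (u : Rˣ) (k : ℤ) :
    (u : R) - 1 ∣ ((u ^ k : Rˣ) : R) - 1 := by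
  set I := Ideal.span {(u : R) - 1}
  rw [← Ideal.mem_span_singleton, ← Ideal.Quotient.eq]
  have hu : Units.map (Ideal.Quotient.mk I : R →* R ⧸ I) u = 1 :=
    Units.ext (Ideal.Quotient.eq.2 (Ideal.mem_span_singleton_self _))
  calc Ideal.Quotient.mk I ((u ^ k : Rˣ) : R)
      = ((Units.map (Ideal.Quotient.mk I : R →* R ⧸ I) u ^ k : (R ⧸ I)ˣ) : R ⧸ I) := by
        rw [← map_zpow]; rfl
    _ = Ideal.Quotient.mk I 1 := by rw [hu, one_zpow, Units.val_one, map_one]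

theorem Associated.addOrderOf_eq {R : Type*} [Semiring R] {a b : R} (h : Associated a b) :
    addOrderOf a = addOrderOf b := by
  obtain ⟨u, rfl⟩ := h
  exact (addOrderOf_injective (AddMonoidHom.mulRight (u : R)) (Units.mulRight u).injective a).symm

namespace ZMod

theorem isUnit_of_not_natCast_dvd {p n : ℕ} (hp : p.Prime) {b : ZMod (p ^ n)}
    (hb : ¬ (p : ZMod (p ^ n)) ∣ b) : IsUnit b := by
  have : NeZero (p ^ n) := ⟨pow_ne_zero n hp.ne_zero⟩
  contrapose! hb
  rcases Nat.eq_zero_or_pos n with rfl | hn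
  · have := subsingleton_iff.2 (pow_zero p)
    exact ⟨0, Subsingleton.elim _ _⟩
  rw [← natCast_zmod_val b, isUnit_natCast_iff_not_dvd_pow hp hn, not_not] at hb
  rw [← natCast_zmod_val b]
  exact Nat.cast_dvd_cast hb

theorem associated_pow_of_exists_eq_pow_mul {p n s : ℕ} (hp : p.Prime) {d : ZMod (p ^ n)}
    (hdvd : ∃ b, d = (p : ZMod (p ^ n)) ^ s * b)
    (hndvd : ¬ ∃ b, d = (p : ZMod (p ^ n)) ^ (s + 1) * b) :
    Associated ((p : ZMod (p ^ n)) ^ s) d := by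
  obtain ⟨b, rfl⟩ := hdvd
  have hb : IsUnit b := isUnit_of_not_natCast_dvd hp fun ⟨c, hc⟩ ↦
    hndvd ⟨c, by rw [hc, pow_succ, mul_assoc]⟩
  exact associated_mul_unit_right _ _ hb

theorem addOrderOf_natCast_pow {p n s : ℕ} (hp : p ≠ 0) (hs : s ≤ n) :
    addOrderOf ((p : ZMod (p ^ n)) ^ s) = p ^ (n - s) := by
  rw [← Nat.cast_pow, addOrderOf_coe _ (pow_ne_zero n hp), Nat.gcd_eq_right (pow_dvd_pow p hs),
    Nat.pow_div hs (Nat.pos_of_ne_zero hp)]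

theorem ofAdd_mem_zpowers_ofAdd_of_dvd {N : ℕ} {d x : ZMod N} (h : d ∣ x) :
    Multiplicative.ofAdd x ∈ Subgroup.zpowers (Multiplicative.ofAdd d) := by
  obtain ⟨c, rfl⟩ := h
  obtain ⟨k, rfl⟩ := intCast_surjective c
  exact ⟨k, by simp only [← ofAdd_zsmul, zsmul_eq_mul, mul_comm]⟩

end ZMod

namespace BeauvilleGroup

variable {p m n : ℕ} {lam : (ZMod (p ^ m))ˣ} {h : lam ^ (p ^ n) = 1}

theorem zmodUnitHom_ofAdd_intCast (k : ℤ) :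
    zmodUnitHom p m n lam h (Multiplicative.ofAdd (k : ZMod (p ^ n))) = lam ^ k := by
  simp [zmodUnitHom]

theorem beauvilleAut_apply (x : Multiplicative (ZMod (p ^ n))) (a : Multiplicative (ZMod (p ^ m))) :
    beauvilleAut p m n lam h x a = .ofAdd (zmodUnitHom p m n lam h x * a.toAdd) :=
  rfl

theorem beauvilleAut_inv_apply (x : Multiplicative (ZMod (p ^ n)))
    (a : Multiplicative (ZMod (p ^ m))) :
    (beauvilleAut p m n lam h x)⁻¹ a = .ofAdd (↑(zmodUnitHom p m n lam h x)⁻¹ * a.toAdd) := by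
  rw [← map_inv, beauvilleAut_apply, map_inv]

theorem sub_one_dvd_zmodUnitHom_sub_one (x : Multiplicative (ZMod (p ^ n))) :
    (lam : ZMod (p ^ m)) - 1 ∣ (zmodUnitHom p m n lam h x : ZMod (p ^ m)) - 1 := by
  obtain ⟨k, hk⟩ := ZMod.intCast_surjective x.toAdd
  rw [← ofAdd_toAdd x, ← hk, zmodUnitHom_ofAdd_intCast]
  exact lam.sub_one_dvd_zpow_sub_one k

theorem commutatorElement_eq_inl (g k : BeauvilleGroup p m n lam h) :
    ⁅g, k⁆ = SemidirectProduct.inl (Multiplicative.ofAdd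
      ((1 - zmodUnitHom p m n lam h k.right) * g.left.toAdd
        + (zmodUnitHom p m n lam h g.right - 1) * k.left.toAdd)) := by
  ext
  · simp only [commutatorElement_def, SemidirectProduct.mul_left, SemidirectProduct.inv_left,
      SemidirectProduct.mul_right, SemidirectProduct.inv_right, MulAut.mul_apply,
      beauvilleAut_apply, beauvilleAut_inv_apply, SemidirectProduct.left_inl, toAdd_mul,
      toAdd_ofAdd, toAdd_inv, map_mul, map_inv]
    simp only [mul_left_comm _ (zmodUnitHom p m n lam h k.right : ZMod (p ^ m)),
      Units.mul_inv_cancel_left]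
    ring
  · simp [commutatorElement_def]

theorem inl_ofAdd_sub_one_eq_commutatorElement :
    (SemidirectProduct.inl (Multiplicative.ofAdd ((lam : ZMod (p ^ m)) - 1)) :
      BeauvilleGroup p m n lam h) =
      ⁅(SemidirectProduct.inr (Multiplicative.ofAdd 1) : BeauvilleGroup p m n lam h),
        SemidirectProduct.inl (Multiplicative.ofAdd 1)⁆ := by
  have hone : zmodUnitHom p m n lam h (Multiplicative.ofAdd (1 : ZMod (p ^ n))) = lam := by
    simpa using zmodUnitHom_ofAdd_intCast (h := h) 1
  rw [commutatorElement_eq_inl]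
  simp [hone]

theorem commutator_eq_map_inl_zpowers :
    commutator (BeauvilleGroup p m n lam h) =
      (Subgroup.zpowers (Multiplicative.ofAdd ((lam : ZMod (p ^ m)) - 1))).map
        SemidirectProduct.inl := by
  apply le_antisymm
  · rw [commutator_def, Subgroup.commutator_le]
    intro g _ k _
    rw [commutatorElement_eq_inl]
    refine Subgroup.mem_map_of_mem _ (ZMod.ofAdd_mem_zpowers_ofAdd_of_dvd (dvd_add ?_ ?_))
    · exact (dvd_sub_comm.1 (sub_one_dvd_zmodUnitHom_sub_one k.right)).mul_right _
    · exact (sub_one_dvd_zmodUnitHom_sub_one g.right).mul_right _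
  · rw [Subgroup.map_le_iff_le_comap, Subgroup.zpowers_le, Subgroup.mem_comap,
      inl_ofAdd_sub_one_eq_commutatorElement]
    exact Subgroup.commutator_mem_commutator (Subgroup.mem_top _) (Subgroup.mem_top _)

theorem card_commutator :
    Nat.card (commutator (BeauvilleGroup p m n lam h)) = addOrderOf ((lam : ZMod (p ^ m)) - 1) := by
  rw [commutator_eq_map_inl_zpowers, Subgroup.card_map_of_injective SemidirectProduct.inl_injective,
    Nat.card_zpowers, orderOf_ofAdd_eq_addOrderOf]

theorem card : Nat.card (BeauvilleGroup p m n lam h) = p ^ m * p ^ n := by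
  simp [Nat.card_congr Multiplicative.toAdd]

end BeauvilleGroup

theorem card_abelianization_semidirect_general
    (p n : ℕ) (hp : p.Prime)
    (lam : (ZMod (p ^ n))ˣ) (h : lam ^ (p ^ n) = 1)
    (s : ℕ) (hs : s < n)
    (hdvd : ∃ b : ZMod (p ^ n), (lam : ZMod (p ^ n)) - 1 = (p : ZMod (p ^ n)) ^ s * b)
    (hndvd : ¬ ∃ b : ZMod (p ^ n), (lam : ZMod (p ^ n)) - 1 = (p : ZMod (p ^ n)) ^ (s + 1) * b) :
    Nat.card (Abelianization (BeauvilleGroup p n n lam h)) = p ^ (n + s) := by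
  have hcomm : Nat.card (commutator (BeauvilleGroup p n n lam h)) = p ^ (n - s) := by
    rw [BeauvilleGroup.card_commutator,
      ← (ZMod.associated_pow_of_exists_eq_pow_mul hp hdvd hndvd).addOrderOf_eq,
      ZMod.addOrderOf_natCast_pow hp.ne_zero hs.le]
  have hcard := (commutator (BeauvilleGroup p n n lam h)).card_eq_card_quotient_mul_card_subgroup
  rw [BeauvilleGroup.card, hcomm, ← pow_add, show n + n = n + s + (n - s) by omega, pow_add] at hcard
  exact (Nat.eq_of_mul_eq_mul_right (pow_pos hp.pos _) hcard).symm

/-- For odd `p` and `λ ≠ 1` with `λ - 1` exactly divisible by `p^s` (`s < n`),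
the abelianization of `G(λ,n,n)` has cardinality `p^(n+s)`. -/
theorem card_abelianization_semidirect
    (p n : ℕ) (hp : p.Prime) (hodd : Odd p) (hn : 1 ≤ n)
    (lam : (ZMod (p ^ n))ˣ) (h : lam ^ (p ^ n) = 1) (hlam : lam ≠ 1)
    (s : ℕ) (hs : s < n)
    (hdvd : ∃ b : ZMod (p ^ n), (lam : ZMod (p ^ n)) - 1 = (p : ZMod (p ^ n)) ^ s * b)
    (hndvd : ¬ ∃ b : ZMod (p ^ n), (lam : ZMod (p ^ n)) - 1 = (p : ZMod (p ^ n)) ^ (s + 1) * b) :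
    Nat.card (Abelianization (BeauvilleGroup p n n lam h)) = p ^ (n + s) :=
  card_abelianization_semidirect_general p n hp lam h s hs hdvd hndvd
end
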